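/- arXiv:1907.13004 — 4 statements merged into one kernel-verified Lean document; each statement's English description precedes it below -/
import Mathlib

section
/- Let n ≥ 1, let μ ∈ ℝ, let h ∈ ℝⁿ, let W ∈ ℝ^{n×n} be a symmetric matrix, and let σ : ℝ → ℝ be continuously differentiable. If there exists a twice continuously differentiable function J : ℝⁿ → ℝ such that ∇J(v) = μ v − W σ(v) − h for every v ∈ ℝⁿ (equivalently, the Wilson–Cowan vector field F(v) = −μ v + W σ(v) + h satisfies F = −∇J), then either W is a diagonal matrix, or σ is an affine function, i.e. there exist α, β ∈ ℝ with σ(x) = α x + β for all x ∈ ℝ. -/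
/-!
The Hessian of a `C²` function is symmetric. If `∇J(v) = μ v - W σ(v) - h`, then the Hessian
of `J` at `v` is `μ I - W diag(σ'(v))`, so its symmetry forces `W i j σ'(v j) = W j i σ'(v i)`.
For symmetric `W` with an off-diagonal entry `W i j ≠ 0` this says `σ'(v j) = σ'(v i)` for
arbitrary values of the coordinates `v i`, `v j`, so `σ'` is constant and `σ` is affine.
-/

open InnerProductSpace

theorem eq_smul_add_of_deriv_eq {𝕜 G : Type*} [RCLike 𝕜] [NormedAddCommGroup G]
    [NormedSpace 𝕜 G] {f : 𝕜 → G} {c : G} (hf : Differentiable 𝕜 f)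
    (hf' : ∀ x, deriv f x = c) (x : 𝕜) : f x = x • c + f 0 := by
  have hderiv (y : 𝕜) : HasDerivAt (fun y ↦ f y - y • c) 0 y := by
    simpa [hf'] using (hf y).hasDerivAt.fun_sub ((hasDerivAt_id y).smul_const c)
  have := is_const_of_deriv_eq_zero (fun y ↦ (hderiv y).differentiableAt)
    (fun y ↦ (hderiv y).deriv) x 0
  rw [zero_smul, sub_zero] at this
  rw [← this, add_sub_cancel]

theorem lineDeriv_inner_gradient_comm {F : Type*} [NormedAddCommGroup F] [InnerProductSpace ℝ F]
    [CompleteSpace F] {J : F → ℝ} {x : F} (hJ : ContDiffAt ℝ 2 J x) (u w : F) :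
    lineDeriv ℝ (fun y ↦ ⟪gradient J y, u⟫_ℝ) x w
      = lineDeriv ℝ (fun y ↦ ⟪gradient J y, w⟫_ℝ) x u := by
  have hJ' : DifferentiableAt ℝ (fderiv ℝ J) x :=
    (hJ.fderiv_right (m := 1) le_rfl).differentiableAt one_ne_zero
  have hpartial (u w : F) :
      lineDeriv ℝ (fun y ↦ ⟪gradient J y, u⟫_ℝ) x w = fderiv ℝ (fderiv ℝ J) x w u := by
    simp only [gradient, toDual_symm_apply]
    exact (((ContinuousLinearMap.apply ℝ ℝ u).hasFDerivAt.comp x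
      hJ'.hasFDerivAt).hasLineDerivAt w).lineDeriv
  rw [hpartial, hpartial, (hJ.isSymmSndFDerivAt (by simp)).eq]

section WilsonCowan

variable {n : ℕ} (μ : ℝ) (W : Matrix (Fin n) (Fin n) ℝ) {σ : ℝ → ℝ} (h : Fin n → ℝ)

theorem hasLineDerivAt_wilsonCowan (hσ : Differentiable ℝ σ) (v : EuclideanSpace ℝ (Fin n))
    (a b : Fin n) :
    HasLineDerivAt ℝ (fun y : EuclideanSpace ℝ (Fin n) ↦ μ * y a - ∑ k, W a k * σ (y k) - h a)
      ((if a = b then μ else 0) - W a b * deriv σ (v b)) v (EuclideanSpace.single b 1) := by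
  have hσk (k : Fin n) : HasFDerivAt (fun y : EuclideanSpace ℝ (Fin n) ↦ σ (y k))
      (deriv σ (v k) • EuclideanSpace.proj k) v :=
    (hσ (v k)).hasDerivAt.comp_hasFDerivAt v (PiLp.hasFDerivAt_apply (𝕜 := ℝ) 2 v k)
  have hF := (((PiLp.hasFDerivAt_apply (𝕜 := ℝ) 2 v a).const_mul μ).fun_sub
    (HasFDerivAt.fun_sum (u := Finset.univ) fun k _ ↦ (hσk k).const_mul (W a k))).sub_const (h a)
  simpa [PiLp.single_apply] using hF.hasLineDerivAt (EuclideanSpace.single b 1)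

variable {μ W h}

theorem mul_deriv_comm_of_gradient_eq_wilsonCowan (hσ : Differentiable ℝ σ)
    {J : EuclideanSpace ℝ (Fin n) → ℝ}
    (hgrad : ∀ (v : EuclideanSpace ℝ (Fin n)) (i : Fin n),
      gradient J v i = μ * v i - (∑ k, W i k * σ (v k)) - h i)
    {v : EuclideanSpace ℝ (Fin n)} (hJ : ContDiffAt ℝ 2 J v) (i j : Fin n) :
    W i j * deriv σ (v j) = W j i * deriv σ (v i) := by
  have hpartial (a b : Fin n) :
      lineDeriv ℝ (fun y ↦ ⟪gradient J y, EuclideanSpace.single a 1⟫_ℝ) v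
        (EuclideanSpace.single b 1) = (if a = b then μ else 0) - W a b * deriv σ (v b) := by
    simp only [EuclideanSpace.inner_single_right, hgrad, conj_trivial, one_mul]
    exact (hasLineDerivAt_wilsonCowan μ W h hσ v a b).lineDeriv
  have hsymm := lineDeriv_inner_gradient_comm hJ (EuclideanSpace.single i 1)
    (EuclideanSpace.single j 1)
  rw [hpartial, hpartial] at hsymm
  by_cases hij : i = j
  · subst hij; rfl
  · simpa [hij, Ne.symm hij] using hsymm

end WilsonCowan

theorem wilsonCowan_variational_implies_diag_or_affine_general
    (n : ℕ) (μ : ℝ) (h : Fin n → ℝ)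
    (W : Matrix (Fin n) (Fin n) ℝ) (hW : W.IsSymm)
    (σ : ℝ → ℝ) (hσ : ContDiff ℝ 1 σ)
    (J : EuclideanSpace ℝ (Fin n) → ℝ) (hJ : ContDiff ℝ 2 J)
    (hgrad : ∀ (v : EuclideanSpace ℝ (Fin n)) (i : Fin n),
      gradient J v i = μ * v i - (∑ k, W i k * σ (v k)) - h i) :
    W.IsDiag ∨ ∃ α β : ℝ, ∀ x : ℝ, σ x = α * x + β := by
  refine or_iff_not_imp_left.2 fun hWdiag ↦ ?_
  obtain ⟨i, j, hij, hWij⟩ : ∃ i j, i ≠ j ∧ W i j ≠ 0 := by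
    simpa [Matrix.IsDiag, Pairwise] using hWdiag
  have hσ' := hσ.differentiable one_ne_zero
  have hderiv (x : ℝ) : deriv σ x = deriv σ 0 := by
    have := mul_deriv_comm_of_gradient_eq_wilsonCowan hσ' hgrad hJ.contDiffAt i j
      (v := WithLp.toLp 2 fun k ↦ if k = i then 0 else x)
    rw [hW.apply i j] at this
    exact mul_left_cancel₀ hWij (by simpa [Ne.symm hij] using this)
  exact ⟨deriv σ 0, σ 0, fun x ↦ by
    simpa [mul_comm] using eq_smul_add_of_deriv_eq hσ' hderiv x⟩

/-- **Non-variational nature of the Wilson–Cowan equations.**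
If the finite-dimensional Wilson–Cowan vector field
`F v = -μ • v + W * σ(v) + h` (with `W` symmetric and `σ ∈ C¹`) is the negative
gradient of a twice continuously differentiable functional `J : ℝⁿ → ℝ`, then
either `W` is diagonal or `σ` is affine. -/
theorem wilsonCowan_variational_implies_diag_or_affine
    (n : ℕ) (hn : 1 ≤ n) (μ : ℝ) (h : Fin n → ℝ)
    (W : Matrix (Fin n) (Fin n) ℝ) (hW : W.IsSymm)
    (σ : ℝ → ℝ) (hσ : ContDiff ℝ 1 σ)
    (J : EuclideanSpace ℝ (Fin n) → ℝ) (hJ : ContDiff ℝ 2 J)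
    (hgrad : ∀ (v : EuclideanSpace ℝ (Fin n)) (i : Fin n),
      gradient J v i = μ * v i - (∑ k, W i k * σ (v k)) - h i) :
    W.IsDiag ∨ ∃ α β : ℝ, ∀ x : ℝ, σ x = α * x + β :=
  wilsonCowan_variational_implies_diag_or_affine_general n μ h W hW σ hσ J hJ hgrad
end

section
/- Let n ≥ 2, let W ∈ ℝ^{n×n} be a symmetric matrix which is not diagonal, and let σ : ℝ → ℝ be differentiable. Suppose that for every v ∈ ℝⁿ the matrix with entries W_{ij} σ′(vⱼ) is symmetric, i.e. W_{ij} σ′(vⱼ) = W_{ji} σ′(vᵢ) for all i, j and all v ∈ ℝⁿ. Then σ′ is a constant function on ℝ; consequently σ is affine, i.e. there exist α, β ∈ ℝ with σ(x) = α x + β for all x ∈ ℝ. -/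
namespace Matrix

variable {ι R : Type*}

theorem exists_ne_apply_ne_zero_of_not_isDiag [Zero R] {W : Matrix ι ι R} (hW : ¬W.IsDiag) :
    ∃ i j, i ≠ j ∧ W i j ≠ 0 := by
  simpa [IsDiag, Pairwise] using hW

/-- Test the hypothesis at an off-diagonal `W i j ≠ 0` on a vector with `v i = y`, `v j = x`. -/
theorem IsSymm.forall_eq_of_forall_mul_comp_symm {W : Matrix ι ι ℝ} (hW : W.IsSymm)
    (hWd : ¬W.IsDiag) {g : ℝ → ℝ}
    (hsym : ∀ (v : ι → ℝ) (i j : ι), W i j * g (v j) = W j i * g (v i))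
    (x y : ℝ) : g x = g y := by
  classical
  obtain ⟨i, j, hij, hWij⟩ := exists_ne_apply_ne_zero_of_not_isDiag hWd
  have hvi : Function.update (fun _ ↦ y) j x i = y := Function.update_of_ne hij _ _
  have h := hsym (Function.update (fun _ ↦ y) j x) i j
  rw [Function.update_self, hvi, hW.apply i j] at h
  exact mul_left_cancel₀ hWij h

end Matrix

theorem exists_eq_mul_add_of_deriv_eq_const {f : ℝ → ℝ} (hf : Differentiable ℝ f) {c : ℝ}
    (hc : ∀ x, deriv f x = c) : ∃ b, ∀ x, f x = c * x + b := by
  obtain ⟨b, hb⟩ := isOpen_univ.exists_eq_add_of_deriv_eq isPreconnected_univ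
    hf.differentiableOn (differentiableOn_id.const_mul c) fun x _ ↦ by simp [hc]
  exact ⟨b, fun x ↦ hb (Set.mem_univ x)⟩

theorem symm_hessian_nondiag_implies_affine_general
    (n : ℕ)
    (W : Matrix (Fin n) (Fin n) ℝ) (hW : W.IsSymm) (hWd : ¬ W.IsDiag)
    (σ : ℝ → ℝ) (hσ : Differentiable ℝ σ)
    (hsym : ∀ (v : Fin n → ℝ) (i j : Fin n),
      W i j * deriv σ (v j) = W j i * deriv σ (v i)) :
    (∃ c : ℝ, ∀ x : ℝ, deriv σ x = c) ∧
      ∃ α β : ℝ, ∀ x : ℝ, σ x = α * x + β := by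
  have hconst : ∀ x, deriv σ x = deriv σ 0 := fun x ↦
    hW.forall_eq_of_forall_mul_comp_symm hWd hsym x 0
  exact ⟨⟨_, hconst⟩, _, exists_eq_mul_add_of_deriv_eq_const hσ hconst⟩

/-- **Symmetry of the Hessian forces an affine nonlinearity.**
If `n ≥ 2`, `W` is symmetric and not diagonal, `σ` is differentiable, and the
matrix `(W i j * σ'(vⱼ))ᵢⱼ` is symmetric for every `v ∈ ℝⁿ`, then `σ'` is
constant and `σ` is affine. -/
theorem symm_hessian_nondiag_implies_affine
    (n : ℕ) (hn : 2 ≤ n)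
    (W : Matrix (Fin n) (Fin n) ℝ) (hW : W.IsSymm) (hWd : ¬ W.IsDiag)
    (σ : ℝ → ℝ) (hσ : Differentiable ℝ σ)
    (hsym : ∀ (v : Fin n → ℝ) (i j : Fin n),
      W i j * deriv σ (v j) = W j i * deriv σ (v i)) :
    (∃ c : ℝ, ∀ x : ℝ, deriv σ x = c) ∧
      ∃ α β : ℝ, ∀ x : ℝ, σ x = α * x + β :=
  symm_hessian_nondiag_implies_affine_general n W hW hWd σ hσ hsym
end

section
/- Let n ≥ 2, μ ∈ ℝ, h ∈ ℝⁿ, let W ∈ ℝ^{n×n} be a symmetric matrix which is not diagonal, and let σ : ℝ → ℝ be continuously differentiable. Then the following are equivalent: (i) there exists a twice continuously differentiable J : ℝⁿ → ℝ such that the Wilson–Cowan vector field F(v) = −μ v + W σ(v) + h satisfies F(v) = −∇J(v) for all v ∈ ℝⁿ; (ii) σ is affine, i.e. there exist α, β ∈ ℝ with σ(x) = α x + β for all x ∈ ℝ. -/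
/-!
If `F = -∇J` with `J` of class `C²`, the Jacobian of `F` is symmetric. Its off-diagonal entries
are `W p q * σ' (v q)`, so a pair `i ≠ j` with `W i j ≠ 0` gives `W i j * σ' b = W j i * σ' a`
for all `a, b`: hence `σ'` is constant and `σ` is affine. Conversely, for `σ x = α x + β` the
field is affine, `F v = -(A v + b)` with `A = μ I - α W` symmetric, and it is minus the gradient
of the quadratic `½ ⟪v, A v⟫ + ⟪b, v⟫`.
-/

open scoped RealInnerProductSpace

theorem EuclideanSpace.gradient_apply {ι : Type*} [Fintype ι] [DecidableEq ι]
    (J : EuclideanSpace ℝ ι → ℝ) (v : EuclideanSpace ℝ ι) (i : ι) :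
    gradient J v i = fderiv ℝ J v (EuclideanSpace.single i 1) := by
  rw [← inner_gradient_left, EuclideanSpace.inner_single_right]
  simp

theorem fderiv_fderiv_apply_comm {E F : Type*} [NormedAddCommGroup E] [NormedSpace ℝ E]
    [NormedAddCommGroup F] [NormedSpace ℝ F] {J : E → F} (hJ : ContDiff ℝ 2 J) (v a b : E) :
    fderiv ℝ (fun y => fderiv ℝ J y a) v b = fderiv ℝ (fun y => fderiv ℝ J y b) v a := by
  have hJ' : DifferentiableAt ℝ (fderiv ℝ J) v :=
    (hJ.fderiv_right (m := 1) le_rfl).differentiable one_ne_zero v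
  rw [fderiv_clm_apply hJ' (differentiableAt_const a),
    fderiv_clm_apply hJ' (differentiableAt_const b)]
  simpa using hJ.contDiffAt.isSymmSndFDerivAt (by simp) b a

theorem eq_mul_add_of_deriv_eq {𝕜 : Type*} [RCLike 𝕜] {f : 𝕜 → 𝕜} {a : 𝕜}
    (hf : Differentiable 𝕜 f) (hf' : ∀ x, deriv f x = a) (x : 𝕜) : f x = a * x + f 0 := by
  have hg : ∀ y, HasDerivAt (fun y => f y - a * y) 0 y := fun y => by
    simpa [hf'] using (hf y).hasDerivAt.fun_sub ((hasDerivAt_id' y).const_mul a)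
  have := is_const_of_deriv_eq_zero (fun y => (hg y).differentiableAt) (fun y => (hg y).deriv) x 0
  simp only [mul_zero, sub_zero] at this
  rw [← this]
  ring

section QuadraticFunctional

variable {F : Type*} [NormedAddCommGroup F] [InnerProductSpace ℝ F]

noncomputable def quadraticFunctional (T : F →L[ℝ] F) (b x : F) : ℝ := 2⁻¹ * ⟪x, T x⟫ + ⟪b, x⟫

theorem contDiff_quadraticFunctional (T : F →L[ℝ] F) (b : F) {n : WithTop ℕ∞} :
    ContDiff ℝ n (quadraticFunctional T b) :=
  (contDiff_const.mul (contDiff_id.inner ℝ T.contDiff)).add (innerSL ℝ b).contDiff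

theorem hasGradientAt_quadraticFunctional [CompleteSpace F] {T : F →L[ℝ] F}
    (hT : (T : F →ₗ[ℝ] F).IsSymmetric) (b x : F) :
    HasGradientAt (quadraticFunctional T b) (T x + b) x := by
  rw [hasGradientAt_iff_hasFDerivAt]
  refine HasFDerivAt.congr_fderiv (HasFDerivAt.add (HasFDerivAt.const_mul
    ((hasFDerivAt_id x).inner ℝ T.hasFDerivAt) 2⁻¹) (innerSL ℝ b).hasFDerivAt) ?_
  ext w
  have hsymm : ⟪x, T w⟫ = ⟪T x, w⟫ := (hT x w).symm
  simp only [add_apply, smul_apply, ContinuousLinearMap.comp_apply, ContinuousLinearMap.prod_apply,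
    ContinuousLinearMap.id_apply, fderivInnerCLM_apply, id_eq, smul_eq_mul, coe_innerSL_apply,
    map_add, InnerProductSpace.toDual_apply_apply]
  rw [hsymm, real_inner_comm (T x) w]
  ring

end QuadraticFunctional

section WilsonCowan

variable {ι : Type*} [Fintype ι]

def wilsonCowan (μ : ℝ) (W : Matrix ι ι ℝ) (σ : ℝ → ℝ) (h : ι → ℝ) (v : EuclideanSpace ℝ ι)
    (i : ι) : ℝ :=
  -(μ * v i) + ∑ k, W i k * σ (v k) + h i

variable {μ : ℝ} {W : Matrix ι ι ℝ} {σ : ℝ → ℝ} {h : ι → ℝ}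

theorem hasFDerivAt_wilsonCowan_apply (hσ : Differentiable ℝ σ) (v : EuclideanSpace ℝ ι) (p : ι) :
    HasFDerivAt (fun y => wilsonCowan μ W σ h y p)
      (-(μ • EuclideanSpace.proj p) + ∑ k, W p k • deriv σ (v k) • EuclideanSpace.proj k :
        EuclideanSpace ℝ ι →L[ℝ] ℝ) v := by
  have hdecay : HasFDerivAt (fun y : EuclideanSpace ℝ ι => -(μ * y p))
      (-(μ • EuclideanSpace.proj p)) v :=
    ((EuclideanSpace.proj (𝕜 := ℝ) p).hasFDerivAt.const_mul μ).fun_neg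
  have hcoupling : HasFDerivAt (fun y : EuclideanSpace ℝ ι => ∑ k, W p k * σ (y k))
      (∑ k, W p k • deriv σ (v k) • EuclideanSpace.proj k) v :=
    HasFDerivAt.fun_sum fun k _ =>
      ((hσ (v k)).hasDerivAt.comp_hasFDerivAt v
        (EuclideanSpace.proj (𝕜 := ℝ) k).hasFDerivAt).const_mul _
  exact (hdecay.add hcoupling).add_const (h p)

theorem fderiv_wilsonCowan_apply_single [DecidableEq ι] (hσ : Differentiable ℝ σ)
    (v : EuclideanSpace ℝ ι) {p q : ι} (hpq : p ≠ q) :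
    fderiv ℝ (fun y => wilsonCowan μ W σ h y p) v (EuclideanSpace.single q 1) =
      W p q * deriv σ (v q) := by
  rw [(hasFDerivAt_wilsonCowan_apply hσ v p).fderiv]
  simp [hpq, PiLp.single_apply]

theorem wilsonCowan_cross_deriv_eq [DecidableEq ι] (hσ : Differentiable ℝ σ)
    {J : EuclideanSpace ℝ ι → ℝ} (hJ : ContDiff ℝ 2 J)
    (hF : ∀ v i, wilsonCowan μ W σ h v i = -(gradient J v i)) (v : EuclideanSpace ℝ ι)
    {p q : ι} (hpq : p ≠ q) :
    W p q * deriv σ (v q) = W q p * deriv σ (v p) := by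
  have hpartial : ∀ r, (fun y => wilsonCowan μ W σ h y r) =
      fun y => -fderiv ℝ J y (EuclideanSpace.single r 1) :=
    fun r => funext fun y => by rw [hF, EuclideanSpace.gradient_apply]
  calc W p q * deriv σ (v q)
      = fderiv ℝ (fun y => wilsonCowan μ W σ h y p) v (EuclideanSpace.single q 1) :=
        (fderiv_wilsonCowan_apply_single hσ v hpq).symm
    _ = -fderiv ℝ (fun y => fderiv ℝ J y (EuclideanSpace.single p 1)) v
          (EuclideanSpace.single q 1) := by rw [hpartial, fderiv_fun_neg]; rfl
    _ = -fderiv ℝ (fun y => fderiv ℝ J y (EuclideanSpace.single q 1)) v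
          (EuclideanSpace.single p 1) := by rw [fderiv_fderiv_apply_comm hJ]
    _ = fderiv ℝ (fun y => wilsonCowan μ W σ h y q) v (EuclideanSpace.single p 1) := by
        rw [hpartial, fderiv_fun_neg]; rfl
    _ = W q p * deriv σ (v p) := fderiv_wilsonCowan_apply_single hσ v hpq.symm

theorem exists_affine_of_wilsonCowan_eq_neg_gradient [DecidableEq ι] (hσ : Differentiable ℝ σ)
    {i j : ι} (hij : i ≠ j) (hWij : W i j ≠ 0) {J : EuclideanSpace ℝ ι → ℝ}
    (hJ : ContDiff ℝ 2 J) (hF : ∀ v i, wilsonCowan μ W σ h v i = -(gradient J v i)) :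
    ∃ α β : ℝ, ∀ x, σ x = α * x + β := by
  have hderiv : ∀ x, deriv σ x = deriv σ 0 := by
    intro x
    have hx := wilsonCowan_cross_deriv_eq hσ hJ hF (EuclideanSpace.single j x) hij
    have h0 := wilsonCowan_cross_deriv_eq hσ hJ hF 0 hij
    simp only [PiLp.single_eq_same, PiLp.single_eq_of_ne _ hij, PiLp.zero_apply] at hx h0
    exact mul_left_cancel₀ hWij (hx.trans h0.symm)
  exact ⟨deriv σ 0, σ 0, eq_mul_add_of_deriv_eq hσ hderiv⟩

open Matrix in
theorem exists_wilsonCowan_eq_neg_gradient_of_affine [DecidableEq ι] (hW : W.IsSymm) {α β : ℝ}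
    (hσ : ∀ x, σ x = α * x + β) :
    ∃ J : EuclideanSpace ℝ ι → ℝ, ContDiff ℝ 2 J ∧
      ∀ v i, wilsonCowan μ W σ h v i = -(gradient J v i) := by
  set A : Matrix ι ι ℝ := μ • 1 - α • W
  have hA : (toEuclideanCLM (n := ι) (𝕜 := ℝ) A : EuclideanSpace ℝ ι →ₗ[ℝ] _).IsSymmetric := by
    rw [coe_toEuclideanCLM_eq_toEuclideanLin, isSymmetric_toEuclideanLin_iff,
      isHermitian_iff_isSymm]
    exact (isSymm_one.smul μ).sub (hW.smul α)
  let b : EuclideanSpace ℝ ι := WithLp.toLp 2 (-(β • (W *ᵥ 1) + h))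
  refine ⟨quadraticFunctional (toEuclideanCLM (n := ι) (𝕜 := ℝ) A) b,
    contDiff_quadraticFunctional _ _, fun v i => ?_⟩
  have hcoupling : ∑ k, W i k * σ (v k) = α * (W *ᵥ v) i + β * (W *ᵥ 1) i := by
    simp only [hσ, mulVec, dotProduct, Pi.one_apply, mul_one, Finset.mul_sum,
      ← Finset.sum_add_distrib]
    exact Finset.sum_congr rfl fun k _ => by ring
  rw [(hasGradientAt_quadraticFunctional hA b v).gradient]
  simp only [wilsonCowan, hcoupling, map_sub, map_smul, map_one, _root_.sub_apply,
    _root_.smul_apply, one_apply_eq_self, WithLp.toLp_neg, WithLp.toLp_add, WithLp.toLp_smul,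
    neg_add_rev, PiLp.add_apply, PiLp.sub_apply, PiLp.smul_apply, smul_eq_mul,
    ofLp_toEuclideanCLM, PiLp.neg_apply, neg_neg, neg_sub, A, b]
  ring

end WilsonCowan

theorem wilsonCowan_variational_iff_affine_general
    (n : ℕ) (μ : ℝ) (h : Fin n → ℝ)
    (W : Matrix (Fin n) (Fin n) ℝ) (hW : W.IsSymm) (hWd : ¬ W.IsDiag)
    (σ : ℝ → ℝ) (hσ : ContDiff ℝ 1 σ) :
    (∃ J : EuclideanSpace ℝ (Fin n) → ℝ, ContDiff ℝ 2 J ∧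
      ∀ (v : EuclideanSpace ℝ (Fin n)) (i : Fin n),
        -(μ * v i) + (∑ k, W i k * σ (v k)) + h i = -(gradient J v i)) ↔
    ∃ α β : ℝ, ∀ x : ℝ, σ x = α * x + β := by
  obtain ⟨i, j, hij, hWij⟩ : ∃ i j, i ≠ j ∧ W i j ≠ 0 := by
    simpa [Matrix.IsDiag, Pairwise] using hWd
  constructor
  · rintro ⟨J, hJ, hF⟩
    exact exists_affine_of_wilsonCowan_eq_neg_gradient (hσ.differentiable one_ne_zero) hij hWij
      hJ hF
  · rintro ⟨α, β, hσ_affine⟩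
    exact exists_wilsonCowan_eq_neg_gradient_of_affine hW hσ_affine

/-- **Characterization of variational Wilson–Cowan dynamics.**
For `n ≥ 2`, `W` symmetric and not diagonal, and `σ ∈ C¹`, the Wilson–Cowan
vector field `F(v) = -μ v + W σ(v) + h` is the negative gradient of some
`C²` functional `J` if and only if `σ` is affine. -/
theorem wilsonCowan_variational_iff_affine
    (n : ℕ) (hn : 2 ≤ n) (μ : ℝ) (h : Fin n → ℝ)
    (W : Matrix (Fin n) (Fin n) ℝ) (hW : W.IsSymm) (hWd : ¬ W.IsDiag)
    (σ : ℝ → ℝ) (hσ : ContDiff ℝ 1 σ) :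
    (∃ J : EuclideanSpace ℝ (Fin n) → ℝ, ContDiff ℝ 2 J ∧
      ∀ (v : EuclideanSpace ℝ (Fin n)) (i : Fin n),
        -(μ * v i) + (∑ k, W i k * σ (v k)) + h i = -(gradient J v i)) ↔
    ∃ α β : ℝ, ∀ x : ℝ, σ x = α * x + β :=
  wilsonCowan_variational_iff_affine_general n μ h W hW hWd σ hσ
end

section
/- Let n ≥ 1, μ ∈ ℝ, h ∈ ℝⁿ, let W ∈ ℝ^{n×n} be a symmetric matrix, let σ : ℝ → ℝ be a continuous odd function, and let Σ : ℝ → ℝ be an antiderivative of σ (Σ′ = σ on ℝ). Define J : ℝⁿ → ℝ by J(v) = (μ/2)‖v‖² − (1/2) Σ_{k,ℓ=1}^{n} W_{kℓ} Σ(vₖ − v_ℓ) − ⟨h, v⟩. Then J is differentiable and the finite-dimensional LHE vector field F(v), with components Fᵢ(v) = −μ vᵢ + Σ_{ℓ=1}^{n} W_{iℓ} σ(vᵢ − v_ℓ) + hᵢ, satisfies F(v) = −∇J(v) for every v ∈ ℝⁿ; i.e. the finite-dimensional LHE equation dv/dt = F(v) is the gradient descent of the energy J. -/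
/-! The quadratic and linear parts of `J` have gradients `μ v` and `h`. For the interaction
energy, the chain rule gives `∑ₖ ∑ₗ W k ℓ σ(vₖ - vₗ) (wₖ - wₗ)` as derivative in direction `w`;
since `W` is symmetric and `σ` odd, the coefficients `W k ℓ σ(vₖ - vₗ)` are antisymmetric in
`(k, ℓ)`, so the `wₗ`-half of the double sum equals the `wₖ`-half and cancels the factor `1/2`. -/

open InnerProductSpace

section Gradient

variable {F : Type*} [NormedAddCommGroup F] [InnerProductSpace ℝ F] [CompleteSpace F]
  {f g : F → ℝ} {f' g' x : F}

theorem HasGradientAt.sub (hf : HasGradientAt f f' x) (hg : HasGradientAt g g' x) :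
    HasGradientAt (fun y => f y - g y) (f' - g') x := by
  rw [hasGradientAt_iff_hasFDerivAt] at *
  simpa only [map_sub] using hf.fun_sub hg

theorem HasGradientAt.const_mul (c : ℝ) (hf : HasGradientAt f f' x) :
    HasGradientAt (fun y => c * f y) (c • f') x := by
  rw [hasGradientAt_iff_hasFDerivAt] at *
  simpa only [map_smul, conj_trivial] using hf.const_mul c

end Gradient

theorem Finset.sum_sum_mul_sub_of_antisymm {ι R : Type*} [Fintype ι] [CommRing R]
    (a : ι → ι → R) (ha : ∀ k ℓ, a ℓ k = -a k ℓ) (w : ι → R) :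
    ∑ k, ∑ ℓ, a k ℓ * (w k - w ℓ) = 2 * ∑ k, (∑ ℓ, a k ℓ) * w k := by
  have hswap : ∑ k, ∑ ℓ, a k ℓ * w ℓ = -∑ k, ∑ ℓ, a k ℓ * w k := by
    rw [Finset.sum_comm, ← Finset.sum_neg_distrib]
    exact Finset.sum_congr rfl fun k _ => by simp only [ha k, neg_mul, Finset.sum_neg_distrib]
  simp only [mul_sub, Finset.sum_sub_distrib, hswap, Finset.sum_mul]
  ring

namespace EuclideanSpace

variable {ι : Type*} [Fintype ι]

theorem hasGradientAt_sum_sq (v : EuclideanSpace ℝ ι) :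
    HasGradientAt (fun v : EuclideanSpace ℝ ι => ∑ i, v i ^ 2) ((2 : ℝ) • v) v := by
  simp only [← real_norm_sq_eq, hasGradientAt_iff_hasFDerivAt]
  refine (hasStrictFDerivAt_norm_sq v).hasFDerivAt.congr_fderiv ?_
  ext w
  simp

theorem hasGradientAt_sum_mul (h : ι → ℝ) (v : EuclideanSpace ℝ ι) :
    HasGradientAt (fun v : EuclideanSpace ℝ ι => ∑ i, h i * v i) (WithLp.toLp 2 h) v := by
  have hdual : (fun v : EuclideanSpace ℝ ι => ∑ i, h i * v i) =
      toDual ℝ (EuclideanSpace ℝ ι) (WithLp.toLp 2 h) := by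
    ext w
    simp [PiLp.inner_apply, mul_comm]
  rw [hasGradientAt_iff_hasFDerivAt, hdual]
  exact ContinuousLinearMap.hasFDerivAt _

theorem hasGradientAt_sum_sum_mul_comp_sub {W : Matrix ι ι ℝ} (hW : W.IsSymm)
    {σ Sig : ℝ → ℝ} (hodd : ∀ x, σ (-x) = -σ x) (hSig : ∀ x, HasDerivAt Sig (σ x) x)
    (v : EuclideanSpace ℝ ι) :
    HasGradientAt (fun v : EuclideanSpace ℝ ι => ∑ k, ∑ ℓ, W k ℓ * Sig (v k - v ℓ))
      (WithLp.toLp 2 fun k => 2 * ∑ ℓ, W k ℓ * σ (v k - v ℓ)) v := by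
  let π (k : ι) : EuclideanSpace ℝ ι →L[ℝ] ℝ := proj k
  have hterm (k ℓ : ι) : HasFDerivAt (fun v : EuclideanSpace ℝ ι => W k ℓ * Sig (v k - v ℓ))
      ((W k ℓ * σ (v k - v ℓ)) • (π k - π ℓ)) v := by
    have hdiff := (hSig (v k - v ℓ)).comp_hasFDerivAt v (π k - π ℓ).hasFDerivAt
    exact (hdiff.const_mul (W k ℓ)).congr_fderiv (by rw [smul_smul])
  have hanti (k ℓ : ι) : W ℓ k * σ (v ℓ - v k) = -(W k ℓ * σ (v k - v ℓ)) := by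
    rw [hW.apply, ← neg_sub, hodd, mul_neg]
  rw [hasGradientAt_iff_hasFDerivAt]
  refine (HasFDerivAt.fun_sum fun k _ => HasFDerivAt.fun_sum fun ℓ _ => hterm k ℓ).congr_fderiv ?_
  ext w
  simp only [π, sum_apply, smul_apply, sub_apply, PiLp.proj_apply, smul_eq_mul,
    toDual_apply_apply, PiLp.inner_apply, RCLike.inner_apply, Real.ringHom_apply,
    Finset.sum_sum_mul_sub_of_antisymm _ hanti]
  rw [Finset.mul_sum]
  exact Finset.sum_congr rfl fun k _ => by ring

end EuclideanSpace

theorem lhe_is_gradient_descent_general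
    (n : ℕ) (μ : ℝ) (h : Fin n → ℝ)
    (W : Matrix (Fin n) (Fin n) ℝ) (hW : W.IsSymm)
    (σ : ℝ → ℝ) (hodd : ∀ x : ℝ, σ (-x) = -σ x)
    (Sig : ℝ → ℝ) (hSig : ∀ x : ℝ, HasDerivAt Sig (σ x) x)
    (J : EuclideanSpace ℝ (Fin n) → ℝ)
    (hJ : ∀ v : EuclideanSpace ℝ (Fin n),
      J v = μ / 2 * (∑ i, (v i) ^ 2)
        - 1 / 2 * (∑ k, ∑ ℓ, W k ℓ * Sig (v k - v ℓ))
        - ∑ i, h i * v i) :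
    Differentiable ℝ J ∧
      ∀ (v : EuclideanSpace ℝ (Fin n)) (i : Fin n),
        -(μ * v i) + (∑ ℓ, W i ℓ * σ (v i - v ℓ)) + h i = -(gradient J v i) := by
  have hgrad (v : EuclideanSpace ℝ (Fin n)) : HasGradientAt J
      ((μ / 2) • (2 : ℝ) • v
        - (1 / 2 : ℝ) • WithLp.toLp 2 (fun k => 2 * ∑ ℓ, W k ℓ * σ (v k - v ℓ))
        - WithLp.toLp 2 h) v := by
    rw [funext hJ]
    exact (((EuclideanSpace.hasGradientAt_sum_sq v).const_mul _).sub
      ((EuclideanSpace.hasGradientAt_sum_sum_mul_comp_sub hW hodd hSig v).const_mul _)).sub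
      (EuclideanSpace.hasGradientAt_sum_mul h v)
  refine ⟨fun v => (hgrad v).differentiableAt, fun v i => ?_⟩
  rw [(hgrad v).gradient]
  simp only [PiLp.sub_apply, PiLp.smul_apply, smul_eq_mul]
  ring

/-- **The finite-dimensional LHE equation is a gradient descent.**
For symmetric `W`, continuous odd `σ` with antiderivative `Σ` (here `Sig`), the
energy `J(v) = (μ/2)‖v‖² - (1/2)∑ₖ∑ₗ W k ℓ * Σ(vₖ - vₗ) - ⟨h, v⟩` is
differentiable and the LHE vector field
`Fᵢ(v) = -μ vᵢ + ∑ₗ W i ℓ * σ(vᵢ - vₗ) + hᵢ` satisfies `F = -∇J`. -/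
theorem lhe_is_gradient_descent
    (n : ℕ) (hn : 1 ≤ n) (μ : ℝ) (h : Fin n → ℝ)
    (W : Matrix (Fin n) (Fin n) ℝ) (hW : W.IsSymm)
    (σ : ℝ → ℝ) (hσ : Continuous σ) (hodd : ∀ x : ℝ, σ (-x) = -σ x)
    (Sig : ℝ → ℝ) (hSig : ∀ x : ℝ, HasDerivAt Sig (σ x) x)
    (J : EuclideanSpace ℝ (Fin n) → ℝ)
    (hJ : ∀ v : EuclideanSpace ℝ (Fin n),
      J v = μ / 2 * (∑ i, (v i) ^ 2)
        - 1 / 2 * (∑ k, ∑ ℓ, W k ℓ * Sig (v k - v ℓ))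
        - ∑ i, h i * v i) :
    Differentiable ℝ J ∧
      ∀ (v : EuclideanSpace ℝ (Fin n)) (i : Fin n),
        -(μ * v i) + (∑ ℓ, W i ℓ * σ (v i - v ℓ)) + h i = -(gradient J v i) :=
  lhe_is_gradient_descent_general n μ h W hW σ hodd Sig hSig J hJ
end
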